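/- arXiv:2404.09523 — 6 statements merged into one kernel-verified Lean document; each statement's English description precedes it below -/
import Mathlib

section
/- For an odd number n of independent voters, each voting correctly with the same fixed probability p with 1/2 < p < 1, the probability that a strict majority votes correctly is strictly increasing in n (over odd n) and tends to 1 as n tends to infinity. -/
/-! Let `L n m = ∑_{i < m} C(n,i) pⁱ (1-p)ⁿ⁻ⁱ` be the binomial lower tail, so that a jury of
`2k+1` has majority probability `1 - L (2k+1) (k+1)`. Pascal's rule gives
`L (n+1) (m+1) = (1-p) L n (m+1) + p L n m`; applied twice, adding two jurors lowers the tail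
by exactly `C(2k+1,k) (p(1-p))ᵏ⁺¹ (2p-1) > 0`. Since `1 - p ≤ p`, every term of the tail is at
most `pᵏ (1-p)ᵏ⁺¹`, so the tail is at most `2²ᵏ⁺¹ pᵏ (1-p)ᵏ⁺¹ = 2(1-p)(4p(1-p))ᵏ → 0`. -/

open Filter

/-- Probability that a strict majority of `n` independent voters, each correct
with probability `p`, vote correctly. -/
noncomputable def Pmaj (n : ℕ) (p : ℝ) : ℝ :=
  ∑ i ∈ Finset.Ioc (n / 2) n, (n.choose i : ℝ) * p ^ i * (1 - p) ^ (n - i)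

open Finset

section CommRing

variable {R : Type*} [CommRing R]

noncomputable def binomTerm (p : R) (n i : ℕ) : R :=
  n.choose i * p ^ i * (1 - p) ^ (n - i)

noncomputable def binomLowerTail (p : R) (n m : ℕ) : R :=
  ∑ i ∈ range m, binomTerm p n i

theorem binomTerm_succ_zero (p : R) (n : ℕ) :
    binomTerm p (n + 1) 0 = (1 - p) * binomTerm p n 0 := by
  simp only [binomTerm, Nat.choose_zero_right, Nat.sub_zero, pow_succ]
  ring

theorem binomTerm_succ_succ (p : R) (n i : ℕ) :
    binomTerm p (n + 1) (i + 1) = (1 - p) * binomTerm p n (i + 1) + p * binomTerm p n i := by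
  rcases lt_or_ge n (i + 1) with hn | hi
  · simp only [binomTerm, Nat.choose_succ_succ', Nat.choose_eq_zero_of_lt hn, add_zero,
      Nat.add_sub_add_right]
    ring
  · obtain ⟨j, rfl⟩ := Nat.exists_eq_add_of_le hi
    simp only [binomTerm, Nat.choose_succ_succ', show i + 1 + j + 1 - (i + 1) = j + 1 by omega,
      show i + 1 + j - (i + 1) = j by omega, show i + 1 + j - i = j + 1 by omega]
    push_cast
    ring

theorem binomLowerTail_succ_succ (p : R) (n m : ℕ) :
    binomLowerTail p (n + 1) (m + 1) =
      (1 - p) * binomLowerTail p n (m + 1) + p * binomLowerTail p n m := by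
  simp only [binomLowerTail, sum_range_succ', binomTerm_succ_succ, binomTerm_succ_zero,
    sum_add_distrib, ← mul_sum]
  ring

theorem binomLowerTail_succ (p : R) (n m : ℕ) :
    binomLowerTail p n (m + 1) = binomLowerTail p n m + binomTerm p n m :=
  sum_range_succ _ _

theorem binomLowerTail_self_succ (p : R) (n : ℕ) : binomLowerTail p n (n + 1) = 1 := by
  have h := (add_pow p (1 - p) n).symm
  rw [add_sub_cancel, one_pow] at h
  rw [← h, binomLowerTail]
  exact sum_congr rfl fun i _ => by rw [binomTerm]; ring

/-- Only the two middle terms `T_k`, `T_{k+1}` survive, and `(1 - p)² T_{k+1} - p² T_k` is the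
single term subtracted. -/
theorem binomLowerTail_two_mul_add_three (p : R) (k : ℕ) :
    binomLowerTail p (2 * k + 3) (k + 2) = binomLowerTail p (2 * k + 1) (k + 1) -
      (2 * k + 1).choose k * (p * (1 - p)) ^ (k + 1) * (2 * p - 1) := by
  rw [show 2 * k + 3 = 2 * k + 1 + 1 + 1 from rfl, binomLowerTail_succ_succ _ (2 * k + 1 + 1),
    binomLowerTail_succ_succ _ (2 * k + 1), binomLowerTail_succ_succ _ (2 * k + 1) k,
    binomLowerTail_succ _ _ (k + 1), binomLowerTail_succ _ _ k]
  simp only [binomTerm, show 2 * k + 1 - k = k + 1 by omega,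
    show 2 * k + 1 - (k + 1) = k by omega, Nat.choose_symm_half, mul_pow]
  ring

end CommRing

theorem binomLowerTail_add_Pmaj (p : ℝ) (n : ℕ) :
    binomLowerTail p n (n / 2 + 1) + Pmaj n p = 1 := by
  rw [← binomLowerTail_self_succ p n, binomLowerTail, binomLowerTail, Pmaj,
    ← Ico_add_one_add_one_eq_Ioc]
  exact sum_range_add_sum_Ico (binomTerm p n) (by omega : n / 2 + 1 ≤ n + 1)

theorem Pmaj_two_mul_add_one (p : ℝ) (k : ℕ) :
    Pmaj (2 * k + 1) p = 1 - binomLowerTail p (2 * k + 1) (k + 1) := by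
  rw [← binomLowerTail_add_Pmaj p (2 * k + 1), show (2 * k + 1) / 2 = k by omega]
  ring

theorem Pmaj_two_mul_add_three (p : ℝ) (k : ℕ) :
    Pmaj (2 * k + 1 + 2) p =
      Pmaj (2 * k + 1) p + (2 * k + 1).choose k * (p * (1 - p)) ^ (k + 1) * (2 * p - 1) := by
  rw [show 2 * k + 1 + 2 = 2 * (k + 1) + 1 by ring, Pmaj_two_mul_add_one, Pmaj_two_mul_add_one,
    show 2 * (k + 1) + 1 = 2 * k + 3 by ring, binomLowerTail_two_mul_add_three]
  ring

theorem pow_mul_one_sub_pow_le {p : ℝ} (hp : 1 / 2 ≤ p) (hp1 : p ≤ 1) {n m i : ℕ}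
    (him : i ≤ m) (hmn : m ≤ n) : p ^ i * (1 - p) ^ (n - i) ≤ p ^ m * (1 - p) ^ (n - m) := by
  have hq : 0 ≤ 1 - p := by linarith
  calc p ^ i * (1 - p) ^ (n - i) = p ^ i * (1 - p) ^ (m - i) * (1 - p) ^ (n - m) := by
        rw [mul_assoc, ← pow_add, show m - i + (n - m) = n - i by omega]
    _ ≤ p ^ i * p ^ (m - i) * (1 - p) ^ (n - m) := by
        gcongr
        linarith
    _ = p ^ m * (1 - p) ^ (n - m) := by rw [← pow_add, Nat.add_sub_cancel' him]

theorem binomLowerTail_succ_le {p : ℝ} (hp : 1 / 2 ≤ p) (hp1 : p ≤ 1) {n m : ℕ}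
    (hmn : m ≤ n) :
    binomLowerTail p n (m + 1) ≤ 2 ^ n * (p ^ m * (1 - p) ^ (n - m)) := by
  set c := p ^ m * (1 - p) ^ (n - m)
  have hc : 0 ≤ c := by
    have : 0 ≤ 1 - p := by linarith
    positivity
  calc binomLowerTail p n (m + 1) ≤ ∑ i ∈ range (m + 1), (n.choose i : ℝ) * c := by
        refine sum_le_sum fun i hi => ?_
        rw [binomTerm, mul_assoc]
        gcongr
        exact pow_mul_one_sub_pow_le hp hp1 (by simpa [Nat.lt_succ_iff] using hi) hmn
    _ ≤ ∑ i ∈ range (n + 1), (n.choose i : ℝ) * c :=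
        sum_le_sum_of_subset_of_nonneg (range_subset_range.2 (by omega))
          fun _ _ _ => by positivity
    _ = 2 ^ n * c := by rw [← sum_mul, ← Nat.cast_sum, Nat.sum_range_choose]; norm_num

theorem tendsto_binomLowerTail_two_mul_add_one {p : ℝ} (hp : 1 / 2 < p) (hp1 : p ≤ 1) :
    Tendsto (fun k : ℕ => binomLowerTail p (2 * k + 1) (k + 1)) atTop (nhds 0) := by
  have hq : 0 ≤ 1 - p := by linarith
  have hbound : ∀ k : ℕ,
      binomLowerTail p (2 * k + 1) (k + 1) ≤ 2 * (1 - p) * (4 * p * (1 - p)) ^ k := by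
    intro k
    refine (binomLowerTail_succ_le hp.le hp1 (by omega)).trans_eq ?_
    rw [show 2 * k + 1 - k = k + 1 by omega, pow_succ, pow_succ, pow_mul, mul_pow, mul_pow]
    norm_num
    ring
  have hnonneg : ∀ k : ℕ, 0 ≤ binomLowerTail p (2 * k + 1) (k + 1) := fun k =>
    sum_nonneg fun i _ => by rw [binomTerm]; positivity
  -- `4 p (1 - p) = 1 - (2 p - 1)² < 1`
  have hratio : 4 * p * (1 - p) < 1 := by nlinarith [mul_pos (sub_pos.2 hp) (sub_pos.2 hp)]
  have hgeom : Tendsto (fun k : ℕ => 2 * (1 - p) * (4 * p * (1 - p)) ^ k) atTop (nhds 0) := by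
    simpa using (tendsto_pow_atTop_nhds_zero_of_lt_one (by positivity) hratio).const_mul
      (2 * (1 - p))
  exact tendsto_of_tendsto_of_tendsto_of_le_of_le tendsto_const_nhds hgeom hnonneg hbound

/-- Condorcet's classical jury theorem: for fixed `1/2 < p < 1`, the majority
probability is strictly increasing over odd `n` and tends to `1`. -/
theorem condorcet_jury (p : ℝ) (hp : 1 / 2 < p) (hp1 : p < 1) :
    (∀ n : ℕ, Odd n → Pmaj n p < Pmaj (n + 2) p) ∧
    Tendsto (fun k : ℕ => Pmaj (2 * k + 1) p) atTop (nhds 1) := by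
  constructor
  · rintro n ⟨k, rfl⟩
    have hq : 0 < 1 - p := by linarith
    have hgain : 0 < ((2 * k + 1).choose k : ℝ) * (p * (1 - p)) ^ (k + 1) * (2 * p - 1) := by
      have : (0 : ℝ) < (2 * k + 1).choose k := by exact_mod_cast Nat.choose_pos (by omega)
      have : 0 < 2 * p - 1 := by linarith
      positivity
    rw [Pmaj_two_mul_add_three]
    linarith
  · simp only [Pmaj_two_mul_add_one]
    simpa using tendsto_const_nhds.sub (tendsto_binomLowerTail_two_mul_add_one hp hp1.le)
end

section
/- Let X_1,...,X_n be (possibly dependent) Bernoulli random variables with Pr(X_i=1)=p_i, p̄ = (1/n)∑p_i > 1/2, d = n(p̄ − 1/2), and σ² = ∑Var(X_i) + 2∑_{i<j}Cov(X_i,X_j). Then the probability that ∑X_i > n/2 is at least d²/(σ² + d²). -/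
/-!
Put `T = ∑ i, X i - n / 2`. Then `E T ≥ d` and `E T² ≤ σ² + d²`, with equality when every
`p i ≥ 0`, for then `E X i = p i`. The one-sided Chebyshev bound follows from Cauchy–Schwarz:
`E T ≤ E[T · 1{T > 0}] ≤ √(E T² · P(T > 0))`.
-/

open MeasureTheory

section SumOverPairs

variable {ι : Type*} [LinearOrder ι] [Fintype ι] [LocallyFiniteOrderTop ι]
  [LocallyFiniteOrderBot ι]

theorem Finset.sum_sum_eq_sum_add_two_mul_sum_sum_Ioi {R : Type*} [NonAssocSemiring R]
    (f : ι → ι → R) (hf : ∀ i j, f i j = f j i) :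
    ∑ i, ∑ j, f i j = ∑ i, f i i + 2 * ∑ i, ∑ j ∈ Ioi i, f i j := by
  classical
  have hoff : 2 * ∑ i, ∑ j ∈ Ioi i, f i j = ∑ i, ∑ j ∈ {i}ᶜ, f i j :=
    calc 2 * ∑ i, ∑ j ∈ Ioi i, f i j = ∑ i, ∑ j ∈ Ioi i, (f j i + f i j) := by
          simp only [mul_sum, two_mul]
          exact sum_congr rfl fun i _ => sum_congr rfl fun j _ => by rw [hf j i]
      _ = ∑ i, ∑ j ∈ {i}ᶜ, f j i := sum_sum_Ioi_add_eq_sum_sum_off_diag f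
      _ = ∑ i, ∑ j ∈ {i}ᶜ, f i j := sum_congr rfl fun i _ => sum_congr rfl fun j _ => hf j i
  rw [hoff, ← sum_add_distrib]
  exact sum_congr rfl fun i _ => Fintype.sum_eq_add_sum_compl i (f i)

theorem sum_mul_one_sub_add_two_mul_sum_Ioi_add_sq (v : ι → ℝ) (E : ι → ι → ℝ) (c : ℝ) :
    ∑ i, v i * (1 - v i) + 2 * ∑ i, ∑ j ∈ Finset.Ioi i, (E i j - v i * v j) + (∑ i, v i - c) ^ 2
      = (1 - 2 * c) * ∑ i, v i + 2 * ∑ i, ∑ j ∈ Finset.Ioi i, E i j + c ^ 2 := by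
  have hsq : (∑ i, v i) ^ 2 = ∑ i, v i * v i + 2 * ∑ i, ∑ j ∈ Finset.Ioi i, v i * v j := by
    rw [sq, Finset.sum_mul_sum]
    exact Finset.sum_sum_eq_sum_add_two_mul_sum_sum_Ioi _ fun i j => mul_comm _ _
  simp only [mul_sub, Finset.sum_sub_distrib, mul_one]
  linear_combination hsq

end SumOverPairs

section Moments

variable {Ω : Type*} [MeasurableSpace Ω] {μ : Measure Ω}

theorem integral_eq_measureReal_of_forall_eq_zero_or_one {X : Ω → ℝ} (hX : Measurable X)
    (h01 : ∀ ω, X ω = 0 ∨ X ω = 1) : ∫ ω, X ω ∂μ = μ.real {ω | X ω = 1} :=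
  calc ∫ ω, X ω ∂μ = ∫ ω, (X ⁻¹' {1}).indicator 1 ω ∂μ := by
        congr 1 with ω
        rcases h01 ω with h | h <;> simp [h]
    _ = μ.real {ω | X ω = 1} := integral_indicator_one (hX (measurableSet_singleton 1))

-- `ENNReal.ofReal` truncates at `0`, so `p` may be negative, and then `∫ X = 0 > p`.
theorem le_integral_of_measure_eq_ofReal {X : Ω → ℝ} {p : ℝ} (hX : Measurable X)
    (h01 : ∀ ω, X ω = 0 ∨ X ω = 1) (hp : μ {ω | X ω = 1} = ENNReal.ofReal p) :
    p ≤ ∫ ω, X ω ∂μ := by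
  rw [integral_eq_measureReal_of_forall_eq_zero_or_one hX h01, measureReal_def, hp,
    ENNReal.toReal_ofReal']
  exact le_max_left _ _

theorem memLp_of_forall_eq_zero_or_one [IsFiniteMeasure μ] {X : Ω → ℝ} (hX : Measurable X)
    (h01 : ∀ ω, X ω = 0 ∨ X ω = 1) (q : ENNReal) : MemLp X q μ :=
  MemLp.of_bound hX.aestronglyMeasurable 1
    (ae_of_all _ fun ω => by rcases h01 ω with h | h <;> simp [h])

theorem integral_sum_sub_const_sq [IsProbabilityMeasure μ] {ι : Type*} [Fintype ι]
    {X : ι → Ω → ℝ} (hX : ∀ i, MemLp (X i) 2 μ) (c : ℝ) :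
    ∫ ω, (∑ i, X i ω - c) ^ 2 ∂μ
      = ∑ i, ∑ j, ∫ ω, X i ω * X j ω ∂μ - 2 * c * ∑ i, ∫ ω, X i ω ∂μ + c ^ 2 := by
  have hX1 : ∀ i, Integrable (X i) μ := fun i => (hX i).integrable one_le_two
  have hXX : ∀ i j, Integrable (fun ω => X i ω * X j ω) μ := fun i j =>
    (hX i).integrable_mul (hX j)
  have hS1 : Integrable (fun ω => ∑ i, X i ω) μ := integrable_finsetSum _ fun i _ => hX1 i
  have hS2 : Integrable (fun ω => ∑ i, ∑ j, X i ω * X j ω) μ :=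
    integrable_finsetSum _ fun i _ => integrable_finsetSum _ fun j _ => hXX i j
  have hS21 : Integrable (fun ω => ∑ i, ∑ j, X i ω * X j ω - 2 * c * ∑ i, X i ω) μ :=
    hS2.sub (hS1.const_mul _)
  have hpt : ∀ ω, (∑ i, X i ω - c) ^ 2
      = ∑ i, ∑ j, X i ω * X j ω - 2 * c * ∑ i, X i ω + c ^ 2 := fun ω => by
    rw [← Finset.sum_mul_sum]
    ring
  simp_rw [hpt]
  rw [integral_add hS21 (integrable_const _), integral_sub hS2 (hS1.const_mul _),
    integral_const_mul, integral_finsetSum _ fun i _ => integrable_finsetSum _ fun j _ => hXX i j,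
    integral_finsetSum _ fun i _ => hX1 i]
  simp_rw [integral_finsetSum _ fun j _ => hXX _ j]
  simp

theorem integral_sum_sub_const_sq_of_forall_eq_zero_or_one [IsProbabilityMeasure μ]
    {ι : Type*} [LinearOrder ι] [Fintype ι] [LocallyFiniteOrderTop ι] [LocallyFiniteOrderBot ι]
    {X : ι → Ω → ℝ} (hX : ∀ i, Measurable (X i)) (h01 : ∀ i ω, X i ω = 0 ∨ X i ω = 1) (c : ℝ) :
    ∫ ω, (∑ i, X i ω - c) ^ 2 ∂μ = (1 - 2 * c) * ∑ i, ∫ ω, X i ω ∂μ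
      + 2 * ∑ i, ∑ j ∈ Finset.Ioi i, ∫ ω, X i ω * X j ω ∂μ + c ^ 2 := by
  have hXX : ∀ i, ∫ ω, X i ω * X i ω ∂μ = ∫ ω, X i ω ∂μ := fun i =>
    integral_congr_ae (ae_of_all _ fun ω => by rcases h01 i ω with h | h <;> simp [h])
  rw [integral_sum_sub_const_sq fun i => memLp_of_forall_eq_zero_or_one (hX i) (h01 i) 2,
    Finset.sum_sum_eq_sum_add_two_mul_sum_sum_Ioi _ fun i j => by simp_rw [mul_comm],
    Finset.sum_congr rfl fun i _ => hXX i]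
  ring

theorem sq_integral_le_integral_sq_mul_measureReal_pos [IsFiniteMeasure μ] {T : Ω → ℝ}
    (hT : MemLp T 2 μ) (hT0 : 0 ≤ ∫ ω, T ω ∂μ) :
    (∫ ω, T ω ∂μ) ^ 2 ≤ (∫ ω, T ω ^ 2 ∂μ) * μ.real {ω | 0 < T ω} := by
  set A := {ω | 0 < T ω}
  have hA : NullMeasurableSet A μ :=
    nullMeasurableSet_lt aemeasurable_const hT.aestronglyMeasurable.aemeasurable
  have hT1 : Integrable T μ := hT.integrable one_le_two
  have hT2 : Integrable (fun ω => T ω ^ 2) μ := hT.integrable_sq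
  have hTA : Integrable (A.indicator T) μ := hT1.indicator₀ hA
  have h1A : Integrable (A.indicator fun _ => (1 : ℝ)) μ := (integrable_const 1).indicator₀ hA
  have hμA : ∫ ω, A.indicator (fun _ => (1 : ℝ)) ω ∂μ = μ.real A := by
    rw [integral_indicator₀ hA, setIntegral_const, smul_eq_mul, mul_one]
  set t := ∫ ω, A.indicator T ω ∂μ
  have hmean : ∫ ω, T ω ∂μ ≤ t := integral_mono hT1 hTA fun ω => by
    by_cases h : 0 < T ω
    · simp [A, h]
    · simp [A, h, not_lt.1 h]
  -- Cauchy–Schwarz for `t = E[T · 1_A]`, via `2 x T 1_A ≤ x² T² + 1_A` and a discriminant.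
  have hquad : ∀ x : ℝ, 0 ≤ (∫ ω, T ω ^ 2 ∂μ) * (x * x) + -(2 * t) * x + μ.real A := by
    intro x
    have hpt : ∫ ω, 2 * x * A.indicator T ω ∂μ
        ≤ ∫ ω, x ^ 2 * T ω ^ 2 + A.indicator (fun _ => (1 : ℝ)) ω ∂μ := by
      refine integral_mono (hTA.const_mul _) ((hT2.const_mul _).add h1A) fun ω => ?_
      by_cases h : ω ∈ A
      · simp only [Set.indicator_of_mem h]
        nlinarith [sq_nonneg (x * T ω - 1)]
      · simp only [Set.indicator_of_notMem h, mul_zero, add_zero]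
        positivity
    rw [integral_const_mul, integral_add (hT2.const_mul _) h1A, integral_const_mul, hμA] at hpt
    linarith
  have hdiscr := discrim_le_zero hquad
  rw [discrim] at hdiscr
  nlinarith [pow_le_pow_left₀ hT0 hmean 2]

theorem sq_div_le_measureReal_pos_of_le_integral [IsFiniteMeasure μ] {T : Ω → ℝ} {d V : ℝ}
    (hT : MemLp T 2 μ) (hd : 0 ≤ d) (hdT : d ≤ ∫ ω, T ω ∂μ) (hV : ∫ ω, T ω ^ 2 ∂μ ≤ V) :
    d ^ 2 / V ≤ μ.real {ω | 0 < T ω} := by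
  refine div_le_of_le_mul₀ ((integral_nonneg fun ω => sq_nonneg _).trans hV) measureReal_nonneg ?_
  calc d ^ 2 ≤ (∫ ω, T ω ∂μ) ^ 2 := pow_le_pow_left₀ hd hdT 2
    _ ≤ (∫ ω, T ω ^ 2 ∂μ) * μ.real {ω | 0 < T ω} :=
      sq_integral_le_integral_sq_mul_measureReal_pos hT (hd.trans hdT)
    _ ≤ μ.real {ω | 0 < T ω} * V := by
      rw [mul_comm]
      exact mul_le_mul_of_nonneg_left hV measureReal_nonneg

end Moments

/-- Ladha's correlated jury theorem: for possibly dependent 0/1 votes with mean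
competence `p̄ > 1/2`, `d = n(p̄ − 1/2)` and `σ²` the variance of the vote sum
(computed from individual variances and pairwise covariances), the probability of a
correct strict majority is at least `d²/(σ² + d²)`. -/
theorem ladha_correlated_jury {Ω : Type*} [MeasurableSpace Ω]
    (μ : Measure Ω) [IsProbabilityMeasure μ]
    (n : ℕ) (hn : 0 < n) (X : Fin n → Ω → ℝ) (p : Fin n → ℝ)
    (hmeas : ∀ i, Measurable (X i))
    (h01 : ∀ i ω, X i ω = 0 ∨ X i ω = 1)
    (hp : ∀ i, μ {ω | X i ω = 1} = ENNReal.ofReal (p i))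
    (pbar d σ2 : ℝ)
    (hpbar : pbar = (∑ i, p i) / n)
    (hhalf : 1 / 2 < pbar)
    (hd : d = n * (pbar - 1 / 2))
    (hσ : σ2 = (∑ i, p i * (1 - p i)) +
      2 * ∑ i, ∑ j ∈ Finset.Ioi i, ((∫ ω, X i ω * X j ω ∂μ) - p i * p j)) :
    d ^ 2 / (σ2 + d ^ 2) ≤ (μ {ω | (n : ℝ) / 2 < ∑ i, X i ω}).toReal := by
  have hX1 : ∀ i, Integrable (X i) μ := fun i =>
    memLp_one_iff_integrable.1 (memLp_of_forall_eq_zero_or_one (hmeas i) (h01 i) 1)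
  have hT : MemLp (fun ω => ∑ i, X i ω - (n : ℝ) / 2) 2 μ :=
    (memLp_finsetSum _ fun i _ => memLp_of_forall_eq_zero_or_one (hmeas i) (h01 i) 2).sub
      (memLp_const _)
  have hp_le : ∑ i, p i ≤ ∑ i, ∫ ω, X i ω ∂μ :=
    Finset.sum_le_sum fun i _ => le_integral_of_measure_eq_ofReal (hmeas i) (h01 i) (hp i)
  have hd' : d = ∑ i, p i - n / 2 := by
    rw [hd, hpbar]
    field_simp
  have hmean : d ≤ ∫ ω, ∑ i, X i ω - n / 2 ∂μ := by
    rw [integral_sub (integrable_finsetSum _ fun i _ => hX1 i) (integrable_const _),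
      integral_finsetSum _ fun i _ => hX1 i, hd']
    simpa using hp_le
  have hsecond : ∫ ω, (∑ i, X i ω - n / 2) ^ 2 ∂μ ≤ σ2 + d ^ 2 := by
    have hn1 : (1 : ℝ) ≤ n := by exact_mod_cast hn
    rw [integral_sum_sub_const_sq_of_forall_eq_zero_or_one hmeas h01, hσ, hd',
      sum_mul_one_sub_add_two_mul_sum_Ioi_add_sq]
    nlinarith
  have hd0 : 0 ≤ d := hd ▸ mul_nonneg n.cast_nonneg (by linarith)
  have hset : {ω | 0 < ∑ i, X i ω - (n : ℝ) / 2} = {ω | (n : ℝ) / 2 < ∑ i, X i ω} :=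
    Set.ext fun _ => sub_pos (α := ℝ)
  rw [← measureReal_def, ← hset]
  exact sq_div_le_measureReal_pos_of_le_integral hT hd0 hmean hsecond
end

section
/- For odd n and p in [1/2, 1], the function P(n,p) = ∑_{i=⌈n/2⌉}^{n} C(n,i) p^i (1−p)^{n−i} is monotonically increasing in p on [1/2,1]. -/
open Polynomial Finset

theorem bernsteinPolynomial.eval_nonneg {R : Type*} [CommRing R] [PartialOrder R]
    [IsOrderedRing R] {n ν : ℕ} {p : R} (hp : p ∈ Set.Icc 0 1) :
    0 ≤ (bernsteinPolynomial R n ν).eval p := by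
  obtain ⟨hp0, hp1⟩ := hp
  have : 0 ≤ 1 - p := sub_nonneg.mpr hp1
  simp only [bernsteinPolynomial, eval_mul, eval_pow, eval_sub, eval_one, eval_X, eval_natCast]
  positivity

theorem bernsteinPolynomial.derivative_sum_Ioc {R : Type*} [CommRing R] {k n : ℕ} (hk : k ≤ n) :
    derivative (∑ i ∈ Ioc k n, bernsteinPolynomial R n i) =
      n * bernsteinPolynomial R (n - 1) k := by
  rw [← Ico_add_one_add_one_eq_Ioc, ← sum_Ico_add', derivative_sum]
  simp_rw [derivative_succ, ← mul_sum]
  simp_rw [← neg_sub (bernsteinPolynomial R (n - 1) (_ + 1)), sum_neg_distrib, sum_Ico_sub _ hk]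
  cases n with
  | zero => simp
  | succ m => simp [eq_zero_of_lt R (Nat.lt_succ_self m)]

theorem bernsteinPolynomial.monotoneOn_eval_sum_Ioc {k n : ℕ} (hk : k ≤ n) :
    MonotoneOn (fun p => (∑ i ∈ Ioc k n, bernsteinPolynomial ℝ n i).eval p)
      (Set.Icc 0 1) := by
  refine monotoneOn_of_deriv_nonneg (convex_Icc 0 1) (Polynomial.continuousOn _)
    (Polynomial.differentiableOn _) fun p hp => ?_
  rw [Polynomial.deriv, derivative_sum_Ioc hk, eval_mul, eval_natCast]
  exact mul_nonneg n.cast_nonneg (eval_nonneg (interior_subset hp))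

theorem Pmaj_eq_eval_sum_bernsteinPolynomial (n : ℕ) (p : ℝ) :
    Pmaj n p = (∑ i ∈ Ioc (n / 2) n, bernsteinPolynomial ℝ n i).eval p := by
  simp [Pmaj, bernsteinPolynomial, eval_finsetSum]

theorem Pmaj_monotoneOn_general (n : ℕ) :
    MonotoneOn (fun p => Pmaj n p) (Set.Icc (1 / 2 : ℝ) 1) := by
  simp only [Pmaj_eq_eval_sum_bernsteinPolynomial]
  exact (bernsteinPolynomial.monotoneOn_eval_sum_Ioc (Nat.div_le_self n 2)).mono
    (Set.Icc_subset_Icc (by norm_num) le_rfl)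

/-- For odd `n`, the strict-majority probability is monotonically increasing in `p`
on `[1/2, 1]`. -/
theorem Pmaj_monotoneOn (n : ℕ) (hn : Odd n) :
    MonotoneOn (fun p => Pmaj n p) (Set.Icc (1 / 2 : ℝ) 1) :=
  Pmaj_monotoneOn_general n
end

section
/- For fixed p with 1/2 ≤ p ≤ 1, the majority probability P(n,p) = ∑_{i=⌈n/2⌉}^{n} C(n,i) p^i (1−p)^{n−i} is nondecreasing in n over odd n. -/
lemma Pmaj_eq (k : ℕ) (p : ℝ) :
    Pmaj (2*k+1) p = ∑ i ∈ Finset.range (k+1),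
      ((2*k+1).choose (k+1+i) : ℝ) * p ^ (k+1+i) * (1-p) ^ (k-i) := by
  unfold Pmaj
  rw [show (2*k+1)/2 = k from by omega,
    show Finset.Ioc k (2*k+1) = Finset.Ico (k+1) (2*k+2) from by
      ext x; simp [Finset.mem_Ioc, Finset.mem_Ico]; omega,
    Finset.sum_Ico_eq_sum_range, show 2*k+2 - (k+1) = k+1 from by omega]
  apply Finset.sum_congr rfl
  intro i hi
  rw [show 2*k+1 - (k+1+i) = k - i from by omega]

lemma choose_add_two (N j : ℕ) :
    (N+2).choose (j+2) = N.choose j + 2 * N.choose (j+1) + N.choose (j+2) := by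
  have h1 : (N+2).choose (j+2) = (N+1).choose (j+1) + (N+1).choose (j+2) :=
    Nat.choose_succ_succ (N+1) (j+1)
  have h2 : (N+1).choose (j+1) = N.choose j + N.choose (j+1) := Nat.choose_succ_succ N j
  have h3 : (N+1).choose (j+2) = N.choose (j+1) + N.choose (j+2) :=
    Nat.choose_succ_succ N (j+1)
  rw [h1, h2, h3]; ring

lemma Pmaj_step (k : ℕ) (p : ℝ) :
    Pmaj (2*k+3) p = Pmaj (2*k+1) p
      + (((2*k+1).choose k : ℝ)) * p^(k+1) * (1-p)^(k+1) * (2*p - 1) := by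
  have h1 : Pmaj (2*k+3) p = ∑ i ∈ Finset.range (k+2),
      ((2*k+3).choose (k+2+i) : ℝ) * p ^ (k+2+i) * (1-p) ^ (k+1-i) := by
    have := Pmaj_eq (k+1) p
    rw [show 2*(k+1)+1 = 2*k+3 from by omega] at this
    rw [this]
  have hPn := Pmaj_eq k p
  have pascal : ∀ i : ℕ, (((2*k+3).choose (k+2+i) : ℝ))
      = ((2*k+1).choose (k+i) : ℝ) + 2 * ((2*k+1).choose (k+1+i) : ℝ)
        + ((2*k+1).choose (k+2+i) : ℝ) := by
    intro i
    have := choose_add_two (2*k+1) (k+i)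
    rw [show (2*k+1)+2 = 2*k+3 from by omega, show (k+i)+2 = k+2+i from by omega,
      show (k+i)+1 = k+1+i from by omega] at this
    rw [this]; push_cast; ring
  have h2 : Pmaj (2*k+3) p
      = (∑ i ∈ Finset.range (k+2), ((2*k+1).choose (k+i) : ℝ) * p ^ (k+2+i) * (1-p) ^ (k+1-i))
      + 2 * (∑ i ∈ Finset.range (k+2), ((2*k+1).choose (k+1+i) : ℝ) * p ^ (k+2+i) * (1-p) ^ (k+1-i))
      + (∑ i ∈ Finset.range (k+2), ((2*k+1).choose (k+2+i) : ℝ) * p ^ (k+2+i) * (1-p) ^ (k+1-i)) := by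
    rw [h1, Finset.mul_sum, ← Finset.sum_add_distrib, ← Finset.sum_add_distrib]
    apply Finset.sum_congr rfl
    intro i _
    rw [pascal i]; ring
  set G : ℝ := ∑ i ∈ Finset.range (k+1),
      (((2*k+1).choose (k+1+i)) : ℝ) * p ^ (k+1+i) * (1-p) ^ (k-i) with hG
  have hA : (∑ i ∈ Finset.range (k+2), ((2*k+1).choose (k+i) : ℝ) * p ^ (k+2+i) * (1-p) ^ (k+1-i))
      = ((2*k+1).choose k : ℝ) * p ^ (k+2) * (1-p) ^ (k+1) + p^2 * G := by
    have tail : (∑ i ∈ Finset.range (k+1),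
        ((2*k+1).choose (k+(i+1)) : ℝ) * p ^ (k+2+(i+1)) * (1-p) ^ (k+1-(i+1)))
        = p^2 * G := by
      rw [hG, Finset.mul_sum]
      apply Finset.sum_congr rfl
      intro i _
      rw [show k+(i+1) = k+1+i from by omega, show k+2+(i+1) = 2+(k+1+i) from by omega,
        show k+1-(i+1) = k-i from by omega, pow_add]
      ring
    rw [Finset.sum_range_succ', tail]
    norm_num
    ring
  have hB : (∑ i ∈ Finset.range (k+2), ((2*k+1).choose (k+1+i) : ℝ) * p ^ (k+2+i) * (1-p) ^ (k+1-i))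
      = p * (1-p) * G := by
    rw [Finset.sum_range_succ,
      show (2*k+1).choose (k+1+(k+1)) = 0 from by apply Nat.choose_eq_zero_of_lt; omega]
    simp only [Nat.cast_zero, zero_mul, add_zero]
    rw [hG, Finset.mul_sum]
    apply Finset.sum_congr rfl
    intro i hi
    have hik : i < k + 1 := Finset.mem_range.mp hi
    rw [show k+2+i = 1+(k+1+i) from by omega, show k+1-i = 1+(k-i) from by omega,
      pow_add, pow_add]
    ring
  have hqG : (1-p)^2 * G
      = (∑ i ∈ Finset.range k, ((2*k+1).choose (k+2+i) : ℝ) * p ^ (k+2+i) * (1-p) ^ (k+1-i))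
        + ((2*k+1).choose (k+1) : ℝ) * p ^ (k+1) * (1-p) ^ (k+2) := by
    rw [hG, Finset.mul_sum, Finset.sum_range_succ']
    congr 1
    · apply Finset.sum_congr rfl
      intro i hi
      have hik : i < k := Finset.mem_range.mp hi
      rw [show k+1+(i+1) = k+2+i from by omega, show k+1-i = 2+(k-(i+1)) from by omega,
        pow_add]
      ring
    · simp only [Nat.add_zero, Nat.sub_zero]
      rw [show k+2 = 2+k from by omega, pow_add]
      ring
  have hC : (∑ i ∈ Finset.range (k+2), ((2*k+1).choose (k+2+i) : ℝ) * p ^ (k+2+i) * (1-p) ^ (k+1-i))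
      = (1-p)^2 * G - ((2*k+1).choose (k+1) : ℝ) * p ^ (k+1) * (1-p) ^ (k+2) := by
    rw [Finset.sum_range_succ, Finset.sum_range_succ,
      show (2*k+1).choose (k+2+(k+1)) = 0 from by apply Nat.choose_eq_zero_of_lt; omega,
      show (2*k+1).choose (k+2+k) = 0 from by apply Nat.choose_eq_zero_of_lt; omega]
    simp only [Nat.cast_zero, zero_mul, add_zero]
    rw [hqG]; ring
  have hcc : (2*k+1).choose k = (2*k+1).choose (k+1) := by
    have := Nat.choose_symm (show k+1 ≤ 2*k+1 from by omega)
    rwa [show 2*k+1 - (k+1) = k from by omega] at this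
  rw [h2, hA, hB, hC, hPn, hcc,
    show k+2 = (k+1)+1 from by omega, pow_succ, pow_succ]
  ring

/-- For fixed `1/2 ≤ p ≤ 1`, the strict-majority probability is nondecreasing in `n`
over odd `n`. -/
theorem Pmaj_mono_in_n (p : ℝ) (hp : 1 / 2 ≤ p) (hp1 : p ≤ 1) :
    ∀ m n : ℕ, Odd m → Odd n → m ≤ n → Pmaj m p ≤ Pmaj n p := by
  have key : ∀ a j : ℕ, Pmaj (2*a+1) p ≤ Pmaj (2*(a+j)+1) p := by
    intro a j
    induction j with
    | zero => simp
    | succ j ih =>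
      refine ih.trans ?_
      rw [show 2*(a+(j+1))+1 = 2*(a+j)+3 from by omega, Pmaj_step (a+j) p]
      have h0 : (0:ℝ) ≤ ((2*(a+j)+1).choose (a+j) : ℝ) * p^((a+j)+1) * (1-p)^((a+j)+1) * (2*p-1) := by
        apply mul_nonneg
        apply mul_nonneg
        apply mul_nonneg
        · positivity
        · positivity
        · apply pow_nonneg; linarith
        · linarith
      linarith
  intro m n hm hn hmn
  obtain ⟨a, ha⟩ := hm
  obtain ⟨b, hb⟩ := hn
  have hab : a ≤ b := by omega
  have := key a (b - a)
  rw [show 2*(a+(b-a))+1 = n from by omega, show 2*a+1 = m from by omega] at this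
  exact this
end

section
/- Let p(t) = min(1/2 + t, 1) and let P_1(T) = p(T) (single voter with full time T) and P_3(T) = (3 − 2p(T/3))·p(T/3)² (three voters with time T/3 each, same learning rate). Then P_1(T) ≥ P_3(T) for all T ≥ 0, with strict inequality for 0 < T < 3/2, i.e., until p(T/3) = 1. -/
/-- With learning profile `p(t) = min(1/2 + t, 1)` and a fixed total time budget `T`,
a single voter (`P₁(T) = p(T)`) does at least as well as three voters with time `T/3`
each (`P₃(T) = (3 − 2p(T/3))·p(T/3)²`), strictly better for `0 < T < 3/2`. -/
theorem single_beats_three :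
    (∀ T : ℝ, 0 ≤ T →
      (3 - 2 * min (1 / 2 + T / 3) 1) * (min (1 / 2 + T / 3) 1) ^ 2 ≤ min (1 / 2 + T) 1) ∧
    (∀ T : ℝ, 0 < T → T < 3 / 2 →
      (3 - 2 * min (1 / 2 + T / 3) 1) * (min (1 / 2 + T / 3) 1) ^ 2 < min (1 / 2 + T) 1) := by
  constructor
  · intro T hT
    rcases le_or_gt (3 / 2) T with h | h
    · rw [min_eq_right (by linarith : (1:ℝ) ≤ 1 / 2 + T / 3),
        min_eq_right (by linarith : (1:ℝ) ≤ 1 / 2 + T)]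
      norm_num
    · rw [min_eq_left (by linarith : (1:ℝ) / 2 + T / 3 ≤ 1)]
      apply le_min
      · nlinarith [sq_nonneg (T / 3), sq_nonneg T]
      · nlinarith [sq_nonneg (1 / 2 - T / 3), sq_nonneg T]
  · intro T hT hT'
    rw [min_eq_left (by linarith : (1:ℝ) / 2 + T / 3 ≤ 1)]
    apply lt_min
    · nlinarith [sq_nonneg (T / 3), sq_nonneg T]
    · nlinarith [sq_nonneg (1 / 2 - T / 3), sq_nonneg T]
end

section
/- Let the single voter have competence p_1(T) = min(1/2 + T, 1), and three voters each have competence p_3(T/3) = min(1/2 + c₃·T/3, 1) with group competence P_3(T) = (3 − 2p_3(T/3))·p_3(T/3)². If c₃ ≤ 2 then P_1(T) ≥ P_3(T) for all T ≥ 0 (until saturation), while if c₃ > 2 there exists an initial interval of T > 0 on which P_3(T) > P_1(T). -/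
/-- Single voter with rate 1, versus three voters with rate `c₃` and time `T/3` each.
If `c₃ ≤ 2` the single voter is at least as good for all `T ≥ 0`; if `c₃ > 2` the
group is strictly better on some initial interval of `T > 0`. -/
theorem critical_rate_three (c3 : ℝ) (hc3 : 0 < c3) :
    (c3 ≤ 2 → ∀ T : ℝ, 0 ≤ T →
      (3 - 2 * min (1 / 2 + c3 * (T / 3)) 1) * (min (1 / 2 + c3 * (T / 3)) 1) ^ 2 ≤
        min (1 / 2 + T) 1) ∧
    (2 < c3 → ∃ ε > (0 : ℝ), ∀ T : ℝ, 0 < T → T < ε →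
      min (1 / 2 + T) 1 <
        (3 - 2 * min (1 / 2 + c3 * (T / 3)) 1) * (min (1 / 2 + c3 * (T / 3)) 1) ^ 2) := by
  constructor
  · intro hle T hT
    set p : ℝ := min (1 / 2 + c3 * (T / 3)) 1 with hp
    have hp1 : p ≤ 1 := min_le_right _ _
    have hphalf : 1 / 2 ≤ p := by
      apply le_min
      · nlinarith [mul_nonneg hc3.le (div_nonneg hT (by norm_num : (0:ℝ) ≤ 3))]
      · norm_num
    by_cases hsat : 1 / 2 + T ≤ 1
    · -- unsaturated single voter: min = 1/2 + T
      rw [min_eq_left hsat]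
      have hx : c3 * (T / 3) ≤ 1 / 2 := by nlinarith
      have hp' : p = 1 / 2 + c3 * (T / 3) := min_eq_left (by linarith)
      rw [hp']
      nlinarith [mul_nonneg (mul_nonneg hc3.le (div_nonneg hT (by norm_num : (0:ℝ) ≤ 3)))
        (mul_nonneg (mul_nonneg hc3.le (div_nonneg hT (by norm_num : (0:ℝ) ≤ 3)))
          (mul_nonneg hc3.le (div_nonneg hT (by norm_num : (0:ℝ) ≤ 3))))]
    · rw [min_eq_right (by linarith)]
      nlinarith [sq_nonneg (1 - p)]
  · intro hgt
    have hc33 : 0 < c3 ^ 3 := by positivity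
    have ha : 0 < 27 * (c3 - 2) / (4 * c3 ^ 3) := div_pos (by nlinarith) (by positivity)
    refine ⟨min (min (1/2) (3 / (2 * c3))) (Real.sqrt (27 * (c3 - 2) / (4 * c3 ^ 3))),
      lt_min (lt_min (by norm_num) (by positivity)) (Real.sqrt_pos.mpr ha), ?_⟩
    intro T hT hTε
    have h1 : T < 1/2 := lt_of_lt_of_le hTε (le_trans (min_le_left _ _) (min_le_left _ _))
    have h2 : T < 3 / (2 * c3) := lt_of_lt_of_le hTε (le_trans (min_le_left _ _) (min_le_right _ _))
    have h3 : T < Real.sqrt (27 * (c3 - 2) / (4 * c3 ^ 3)) :=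
      lt_of_lt_of_le hTε (min_le_right _ _)
    have hT2 : T ^ 2 < 27 * (c3 - 2) / (4 * c3 ^ 3) := by
      have := (Real.lt_sqrt hT.le).mp h3
      linarith
    have hT2' : 4 * c3 ^ 3 * T ^ 2 < 27 * (c3 - 2) := by
      have := (lt_div_iff₀ (by positivity : (0:ℝ) < 4 * c3 ^ 3)).mp hT2
      nlinarith
    have hx : c3 * (T / 3) ≤ 1 / 2 := by
      have : c3 * T < 3 / 2 := by
        have := (lt_div_iff₀ (by positivity : (0:ℝ) < 2 * c3)).mp h2
        nlinarith
      linarith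
    rw [min_eq_left (by linarith : (1:ℝ)/2 + T ≤ 1), min_eq_left (by linarith)]
    nlinarith [hT2', mul_pos hT hT]
end
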